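/- arXiv:1905.09886 — 4 statements merged into one kernel-verified Lean document; each statement's English description precedes it below -/
import Mathlib

section
/- Let ρ, γ : C → D be coalgebra homomorphisms between pointed coalgebras with ρ ∼ γ, meaning (ρ − γ)(C₀) = 0 and (ρ − γ)(C₁) ⊆ D₀. Then for every n ≥ 0, (ρ − γ)(Cₙ) ⊆ D_{n−1} (with D_{−1} = 0). -/
open TensorProduct

/-- Let `ρ, γ : C → D` be coalgebra homomorphisms between pointed coalgebras
with `ρ ∼ γ`, i.e. `(ρ − γ)(C₀) = 0` and `(ρ − γ)(C₁) ⊆ D₀`.  Then for every `n ≥ 0`,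
`(ρ − γ)(Cₙ) ⊆ D_{n−1}` (with `D_{−1} = 0`).

The coradical filtrations are abstracted as families of submodules `fC`, `fD` satisfying
the defining/basic properties listed in the context: they are increasing,
`Δ(Cₙ) ⊆ Σ_{i=0}^n C_i ⊗ C_{n−i}`, the filtration of `D` satisfies the inductive definition
`D_{n+1} = Δ⁻¹(D ⊗ Dₙ + D₀ ⊗ D)`, and coalgebra homomorphisms are filtered. -/
theorem sim_shifts_coradical_filtration (k C D : Type*) [Field k]
    [AddCommGroup C] [Module k C] [Coalgebra k C]
    [AddCommGroup D] [Module k D] [Coalgebra k D]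
    (fC : ℕ → Submodule k C) (fD : ℕ → Submodule k D)
    (hmonC : Monotone fC) (hmonD : Monotone fD)
    (hΔC : ∀ n, ∀ x ∈ fC n, Coalgebra.comul (R := k) x ∈
      ⨆ i ∈ Finset.range (n + 1),
        Submodule.map₂ (TensorProduct.mk k C C) (fC i) (fC (n - i)))
    (hDdef : ∀ n, fD (n + 1) = Submodule.comap (Coalgebra.comul (R := k))
      (Submodule.map₂ (TensorProduct.mk k D D) ⊤ (fD n) ⊔
        Submodule.map₂ (TensorProduct.mk k D D) (fD 0) ⊤))
    (ρ γ : C →ₗc[k] D)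
    (hρ : ∀ n, ∀ x ∈ fC n, ρ x ∈ fD n) (hγ : ∀ n, ∀ x ∈ fC n, γ x ∈ fD n)
    (h0 : ∀ x ∈ fC 0, ρ x = γ x) (h1 : ∀ x ∈ fC 1, ρ x - γ x ∈ fD 0) :
    (∀ x ∈ fC 0, ρ x = γ x) ∧ ∀ n, ∀ x ∈ fC (n + 1), ρ x - γ x ∈ fD n := by
  refine ⟨h0, ?_⟩
  intro n
  induction n using Nat.strong_induction_on with
  | _ n IH =>
  intro x hx
  match n, hx with
  | 0, hx => exact h1 x hx
  | (m+1), hx =>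
    have hclaim : ∀ t, t ≤ m + 1 → ∀ b ∈ fC t, ρ b - γ b ∈ fD m := by
      intro t ht b hb
      match t, ht with
      | 0, _ => rw [h0 b hb]; simp
      | (j+1), ht => exact hmonD (by omega) (IH j (by omega) b hb)
    rw [hDdef m, Submodule.mem_comap]
    set L := TensorProduct.map (ρ : C →ₗ[k] D) (ρ : C →ₗ[k] D)
      - TensorProduct.map (γ : C →ₗ[k] D) (γ : C →ₗ[k] D) with hL
    have hΔ : Coalgebra.comul (R := k) (ρ x - γ x) = L (Coalgebra.comul (R := k) x) := by
      rw [map_sub, hL, LinearMap.sub_apply, CoalgHomClass.map_comp_comul_apply,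
        CoalgHomClass.map_comp_comul_apply]
    rw [hΔ]
    set M := (Submodule.map₂ (TensorProduct.mk k D D) ⊤ (fD m) ⊔
        Submodule.map₂ (TensorProduct.mk k D D) (fD 0) ⊤) with hM
    have hle : (⨆ i ∈ Finset.range (m+1+1+1),
        Submodule.map₂ (TensorProduct.mk k C C) (fC i) (fC (m+1+1-i))) ≤ M.comap L := by
      refine iSup₂_le fun i hi => Submodule.map₂_le.mpr fun a ha b hb => ?_
      simp only [Submodule.mem_comap, hL, LinearMap.sub_apply, TensorProduct.mk_apply,
        TensorProduct.map_tmul]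
      show ρ a ⊗ₜ[k] ρ b - γ a ⊗ₜ[k] γ b ∈ M
      have hsplit : ρ a ⊗ₜ[k] ρ b - γ a ⊗ₜ[k] γ b
          = ρ a ⊗ₜ[k] (ρ b - γ b) + (ρ a - γ a) ⊗ₜ[k] γ b := by
        rw [TensorProduct.tmul_sub, TensorProduct.sub_tmul]; abel
      rw [hsplit, hM]
      match i, ha, hb with
      | 0, ha, hb =>
        have h2 : ρ a - γ a = 0 := by rw [h0 a ha]; simp
        rw [h2, TensorProduct.zero_tmul, add_zero, ← TensorProduct.mk_apply]
        exact Submodule.mem_sup_right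
          (Submodule.apply_mem_map₂ _ (hρ 0 a ha) Submodule.mem_top)
      | 1, ha, hb =>
        refine add_mem (Submodule.mem_sup_left ?_) (Submodule.mem_sup_right ?_)
        · rw [← TensorProduct.mk_apply]
          exact Submodule.apply_mem_map₂ _ Submodule.mem_top
            (hclaim (m+1+1-1) (by omega) b hb)
        · rw [← TensorProduct.mk_apply]
          exact Submodule.apply_mem_map₂ _ (h1 a ha) Submodule.mem_top
      | (j+2), ha, hb =>
        refine add_mem (Submodule.mem_sup_left ?_) (Submodule.mem_sup_left ?_)
        · rw [← TensorProduct.mk_apply]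
          exact Submodule.apply_mem_map₂ _ Submodule.mem_top
            (hclaim (m+1+1-(j+2)) (by omega) b hb)
        · rw [← TensorProduct.mk_apply]
          exact Submodule.apply_mem_map₂ _ Submodule.mem_top
            (hmonD (by omega : m+1+1-(j+2) ≤ m) (hγ _ b hb))
    exact hle (hΔC (m+1+1) x hx)
end

section
/- The relation ρ ∼ γ defined on coalgebra homomorphisms between pointed coalgebras by (ρ − γ)(C₀) = 0 and (ρ − γ)(C₁) ⊆ D₀ is a congruence: it is an equivalence relation on each hom-set and is compatible with composition on both sides. -/
open TensorProduct

/-- The relation `ρ ∼ γ` on coalgebra homomorphisms: `(ρ − γ)(C₀) = 0` and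
`(ρ − γ)(C₁) ⊆ D₀`, where `fC`, `fD` are the coradical filtrations. -/
def CoalgSim {k C D : Type*} [Field k]
    [AddCommGroup C] [Module k C] [Coalgebra k C]
    [AddCommGroup D] [Module k D] [Coalgebra k D]
    (fC : ℕ → Submodule k C) (fD : ℕ → Submodule k D) (ρ γ : C →ₗc[k] D) : Prop :=
  (∀ x ∈ fC 0, ρ x = γ x) ∧ ∀ x ∈ fC 1, ρ x - γ x ∈ fD 0

/-- The relation `∼` on coalgebra homomorphisms between pointed coalgebras
is a congruence: an equivalence relation on each hom-set which is compatible with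
composition on both sides.  (The coradical filtrations are abstracted as families of
submodules; compatibility with composition uses the fact that coalgebra homomorphisms
preserve the coradical filtration, which appears as hypotheses on the composed maps.) -/
theorem coalgSim_is_congruence (k B C D E : Type*) [Field k]
    [AddCommGroup B] [Module k B] [Coalgebra k B]
    [AddCommGroup C] [Module k C] [Coalgebra k C]
    [AddCommGroup D] [Module k D] [Coalgebra k D]
    [AddCommGroup E] [Module k E] [Coalgebra k E]
    (fB : ℕ → Submodule k B) (fC : ℕ → Submodule k C)
    (fD : ℕ → Submodule k D) (fE : ℕ → Submodule k E) :
    (∀ ρ : C →ₗc[k] D, CoalgSim fC fD ρ ρ) ∧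
    (∀ ρ γ : C →ₗc[k] D, CoalgSim fC fD ρ γ → CoalgSim fC fD γ ρ) ∧
    (∀ ρ γ σ : C →ₗc[k] D,
      CoalgSim fC fD ρ γ → CoalgSim fC fD γ σ → CoalgSim fC fD ρ σ) ∧
    (∀ (φ : B →ₗc[k] C) (ρ γ : C →ₗc[k] D),
      (∀ x ∈ fB 0, φ x ∈ fC 0) → (∀ x ∈ fB 1, φ x ∈ fC 1) →
      CoalgSim fC fD ρ γ → CoalgSim fB fD (ρ.comp φ) (γ.comp φ)) ∧
    (∀ (ψ : D →ₗc[k] E) (ρ γ : C →ₗc[k] D),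
      (∀ x ∈ fD 0, ψ x ∈ fE 0) →
      CoalgSim fC fD ρ γ → CoalgSim fC fE (ψ.comp ρ) (ψ.comp γ)) := by
  refine ⟨?_, ?_, ?_, ?_, ?_⟩
  · intro ρ
    exact ⟨fun x _ => rfl, fun x _ => by simp⟩
  · rintro ρ γ ⟨h0, h1⟩
    exact ⟨fun x hx => (h0 x hx).symm, fun x hx => by
      have := (fD 0).neg_mem (h1 x hx); simpa using this⟩
  · rintro ρ γ σ ⟨h0, h1⟩ ⟨g0, g1⟩
    refine ⟨fun x hx => (h0 x hx).trans (g0 x hx), fun x hx => ?_⟩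
    have := (fD 0).add_mem (h1 x hx) (g1 x hx)
    simpa using this
  · rintro φ ρ γ hφ0 hφ1 ⟨h0, h1⟩
    exact ⟨fun x hx => h0 (φ x) (hφ0 x hx), fun x hx => h1 (φ x) (hφ1 x hx)⟩
  · rintro ψ ρ γ hψ ⟨h0, h1⟩
    refine ⟨fun x hx => by simp [CoalgHom.comp_apply, h0 x hx], fun x hx => ?_⟩
    have : ψ (ρ x - γ x) ∈ fE 0 := hψ _ (h1 x hx)
    simpa [map_sub] using this
end

section
/- For algebra homomorphisms α, β : A → B between pseudocompact pointed algebras, if α ∼ β (meaning (α − β)(A) ⊆ J(B) and (α − β)(J(A)) ⊆ J²(B)), then (α − β)(Jⁿ(A)) ⊆ J^{n+1}(B) for every n ≥ 0. -/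
/-- `Iⁿ * I² = I^(n+2)` for ideals of a possibly noncommutative ring. -/
lemma idealPowAddTwo {B : Type*} [Ring B] (I : Ideal B) (n : ℕ) :
    I ^ n * I ^ 2 = I ^ (n + 2) := by
  have h2 : I ^ 2 = I * I := by
    rw [Submodule.pow_succ, Submodule.pow_one]
  rw [h2, ← Ideal.mul_assoc, ← Submodule.pow_succ, ← Submodule.pow_succ]

/-- An algebra hom mapping `J(A)` into `J(B)` maps `J(A)^n` into `J(B)^n`. -/
lemma algHom_map_jacobson_pow {k A B : Type*} [Field k]
    [Ring A] [Algebra k A] [Ring B] [Algebra k B]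
    (α : A →ₐ[k] B)
    (hα : ∀ a ∈ Ideal.jacobson (⊥ : Ideal A), α a ∈ Ideal.jacobson (⊥ : Ideal B)) :
    ∀ n : ℕ, ∀ a ∈ (Ideal.jacobson (⊥ : Ideal A)) ^ n,
      α a ∈ (Ideal.jacobson (⊥ : Ideal B)) ^ n := by
  intro n
  induction n with
  | zero =>
    intro a _
    show α a ∈ (1 : Ideal B)
    rw [Ideal.one_eq_top]; exact Submodule.mem_top
  | succ n ih =>
    intro a ha
    have ha' : a ∈ (Ideal.jacobson (⊥ : Ideal A)) ^ n * Ideal.jacobson (⊥ : Ideal A) := ha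
    show α a ∈ (Ideal.jacobson (⊥ : Ideal B)) ^ n * Ideal.jacobson (⊥ : Ideal B)
    refine Submodule.mul_induction_on ha' ?_ ?_
    · intro x hx y hy
      rw [map_mul]
      exact Ideal.mul_mem_mul (ih x hx) (hα y hy)
    · intro x y hx hy
      rw [map_add]; exact add_mem hx hy

/-- For algebra homomorphisms `α, β : A → B` between (pseudocompact)
pointed algebras, if `α ∼ β` (meaning `(α − β)(A) ⊆ J(B)` and `(α − β)(J(A)) ⊆ J²(B)`),
then `(α − β)(Jⁿ(A)) ⊆ J^{n+1}(B)` for every `n ≥ 0`.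

Here `J(−)` is the Jacobson radical (`Ideal.jacobson ⊥`), `Jⁿ` its `n`-th power, and we
assume, as in the context, that the homomorphisms map `J(A)` into `J(B)`. -/
theorem algSim_shifts_radical_filtration (k A B : Type*) [Field k]
    [Ring A] [Algebra k A] [Ring B] [Algebra k B]
    (α β : A →ₐ[k] B)
    (hα : ∀ a ∈ Ideal.jacobson (⊥ : Ideal A), α a ∈ Ideal.jacobson (⊥ : Ideal B))
    (hβ : ∀ a ∈ Ideal.jacobson (⊥ : Ideal A), β a ∈ Ideal.jacobson (⊥ : Ideal B))
    (h0 : ∀ a : A, α a - β a ∈ Ideal.jacobson (⊥ : Ideal B))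
    (h1 : ∀ a ∈ Ideal.jacobson (⊥ : Ideal A),
      α a - β a ∈ (Ideal.jacobson (⊥ : Ideal B)) ^ 2) :
    ∀ n : ℕ, ∀ a ∈ (Ideal.jacobson (⊥ : Ideal A)) ^ n,
      α a - β a ∈ (Ideal.jacobson (⊥ : Ideal B)) ^ (n + 1) := by
  set JB := Ideal.jacobson (⊥ : Ideal B) with hJB
  intro n
  induction n with
  | zero =>
    intro a _
    show α a - β a ∈ (1 : Ideal B) * JB
    rw [Ideal.one_eq_top, Ideal.top_mul]
    exact h0 a
  | succ n ih =>
    intro a ha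
    have ha' : a ∈ (Ideal.jacobson (⊥ : Ideal A)) ^ n * Ideal.jacobson (⊥ : Ideal A) := ha
    refine Submodule.mul_induction_on ha' ?_ ?_
    · intro x hx y hy
      have key : α (x * y) - β (x * y)
          = α x * (α y - β y) + (α x - β x) * β y := by
        rw [map_mul, map_mul]; noncomm_ring
      rw [key]
      refine add_mem ?_ ?_
      · have h2 : α x * (α y - β y) ∈ JB ^ n * JB ^ 2 :=
          Ideal.mul_mem_mul (algHom_map_jacobson_pow α hα n x hx) (h1 y hy)
        rwa [idealPowAddTwo] at h2
      · have h2 : (α x - β x) * β y ∈ JB ^ (n + 1) * JB :=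
          Ideal.mul_mem_mul (ih x hx) (hβ y hy)
        exact h2
    · intro x y hx hy
      have : α (x + y) - β (x + y) = (α x - β x) + (α y - β y) := by
        rw [map_add, map_add]; abel
      rw [this]; exact add_mem hx hy
end

section
/- The relation α ∼ β on algebra homomorphisms A → B, defined by (α − β)(A) ⊆ J(B) and (α − β)(J(A)) ⊆ J²(B), is a congruence: an equivalence relation compatible with composition on both sides. -/
/-- The relation `α ∼ β` on algebra homomorphisms: `(α − β)(A) ⊆ J(B)` and
`(α − β)(J(A)) ⊆ J²(B)`, where `J` denotes the Jacobson radical. -/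
def AlgSim {k A B : Type*} [Field k] [Ring A] [Algebra k A] [Ring B] [Algebra k B]
    (α β : A →ₐ[k] B) : Prop :=
  (∀ a : A, α a - β a ∈ Ideal.jacobson (⊥ : Ideal B)) ∧
    ∀ a ∈ Ideal.jacobson (⊥ : Ideal A),
      α a - β a ∈ (Ideal.jacobson (⊥ : Ideal B)) ^ 2

/-- The relation `α ∼ β` on algebra homomorphisms `A → B` is a congruence:
an equivalence relation compatible with composition on both sides.  (As in the context,
the maps being composed are assumed to send the Jacobson radical into the Jacobson
radical, as is the case for pointed pseudocompact algebras.) -/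
theorem algSim_is_congruence (k A B C D : Type*) [Field k]
    [Ring A] [Algebra k A] [Ring B] [Algebra k B]
    [Ring C] [Algebra k C] [Ring D] [Algebra k D] :
    (∀ α : B →ₐ[k] C, AlgSim α α) ∧
    (∀ α β : B →ₐ[k] C, AlgSim α β → AlgSim β α) ∧
    (∀ α β γ : B →ₐ[k] C, AlgSim α β → AlgSim β γ → AlgSim α γ) ∧
    (∀ (φ : A →ₐ[k] B) (α β : B →ₐ[k] C),
      (∀ a ∈ Ideal.jacobson (⊥ : Ideal A), φ a ∈ Ideal.jacobson (⊥ : Ideal B)) →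
      AlgSim α β → AlgSim (α.comp φ) (β.comp φ)) ∧
    (∀ (ψ : C →ₐ[k] D) (α β : B →ₐ[k] C),
      (∀ c ∈ Ideal.jacobson (⊥ : Ideal C), ψ c ∈ Ideal.jacobson (⊥ : Ideal D)) →
      AlgSim α β → AlgSim (ψ.comp α) (ψ.comp β)) := by
  refine ⟨?_, ?_, ?_, ?_, ?_⟩
  · intro α
    exact ⟨fun a => by simp, fun a _ => by simp⟩
  · rintro α β ⟨h1, h2⟩
    refine ⟨fun a => ?_, fun a ha => ?_⟩
    · have := (Ideal.jacobson (⊥ : Ideal C)).neg_mem (h1 a); simpa using this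
    · have := ((Ideal.jacobson (⊥ : Ideal C)) ^ 2).neg_mem (h2 a ha); simpa using this
  · rintro α β γ ⟨h1, h2⟩ ⟨h3, h4⟩
    refine ⟨fun a => ?_, fun a ha => ?_⟩
    · have := (Ideal.jacobson (⊥ : Ideal C)).add_mem (h1 a) (h3 a)
      simpa using this
    · have := ((Ideal.jacobson (⊥ : Ideal C)) ^ 2).add_mem (h2 a ha) (h4 a ha)
      simpa using this
  · rintro φ α β hφ ⟨h1, h2⟩
    exact ⟨fun a => h1 (φ a), fun a ha => h2 (φ a) (hφ a ha)⟩
  · rintro ψ α β hψ ⟨h1, h2⟩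
    refine ⟨fun a => ?_, fun a ha => ?_⟩
    · have := hψ _ (h1 a); simpa using this
    · have key : ∀ x ∈ (Ideal.jacobson (⊥ : Ideal C)) ^ 2,
          ψ x ∈ (Ideal.jacobson (⊥ : Ideal D)) ^ 2 := by
        intro x hx
        rw [Submodule.pow_succ, Submodule.pow_one] at hx ⊢
        refine Submodule.mul_induction_on hx (fun m hm n hn => ?_) (fun x y hx hy => ?_)
        · rw [map_mul]
          exact Ideal.mul_mem_mul (hψ m hm) (hψ n hn)
        · rw [map_add]; exact Ideal.add_mem _ hx hy
      have := key _ (h2 a ha)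
      simpa using this
end
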